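/- (Minimum relative entropy.) Let p be a probability measure on a measurable space X, let f : X → ℝ^k be measurable, and let λ ∈ ℝ^k be such that Z := ∫ exp(−⟨λ, f(x)⟩) dp(x) is finite and positive. Define q* as the probability measure with density exp(−⟨λ, f⟩)/Z with respect to p, and suppose f is q*-integrable with mean f̂ := ∫ f dq*. Then q* minimizes relative entropy subject to the moment constraint: for every probability measure q absolutely continuous with respect to p such that f is q-integrable and ∫ f dq = f̂, one has KL(q*‖p) ≤ KL(q‖p). -/

import Mathlib

/-!
Write `q* = p.tilted g` with `g = -⟪λ, f⟫`, so that `log (dq*/dp) = g - log Z`. For `q ≪ p`,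
`llr q p = llr q q* + g - log Z` holds `q`-a.e., and Gibbs' inequality `∫ llr q q* dq ≥ 0` gives
the Donsker–Varadhan bound `∫ g dq - log Z ≤ KL(q‖p)`. Under the moment constraint the left-hand
side is `∫ g dq* - log Z = KL(q*‖p)`.
-/

open MeasureTheory RealInnerProductSpace ENNReal Classical

/-- Kullback–Leibler divergence `∫ log (dq/dp) dq` of `q` with respect to `p`, with value `∞`
when the integrand is not `q`-integrable (for probability measures `q ≪ p` the negative part
of `log (dq/dp)` is always `q`-integrable, so non-integrability means `KL = ∞`). -/
noncomputable def KL {X : Type*} [MeasurableSpace X] (q p : Measure X) : ℝ≥0∞ :=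
  if Integrable (fun x => Real.log ((q.rnDeriv p x).toReal)) q then
    ENNReal.ofReal (∫ x, Real.log ((q.rnDeriv p x).toReal) ∂q)
  else ⊤

section KL

variable {X : Type*} [MeasurableSpace X] {p q : Measure X}

lemma KL_of_integrable (h : Integrable (llr q p) q) : KL q p = ENNReal.ofReal (∫ x, llr q p x ∂q) :=
  if_pos h

lemma KL_of_not_integrable (h : ¬ Integrable (llr q p) q) : KL q p = ⊤ :=
  if_neg h

lemma integral_llr_nonneg [IsProbabilityMeasure q] [IsProbabilityMeasure p] (hqp : q ≪ p)
    (h_int : Integrable (llr q p) q) : 0 ≤ ∫ x, llr q p x ∂q := by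
  simpa using InformationTheory.integral_llr_add_sub_measure_univ_nonneg hqp h_int

variable {g : X → ℝ}

lemma llr_tilted_left_self [SigmaFinite p] (hg_exp : Integrable (fun x ↦ Real.exp (g x)) p) :
    llr (p.tilted g) p =ᵐ[p.tilted g] fun x ↦ g x - Real.log (∫ x, Real.exp (g x) ∂p) :=
  (tilted_absolutelyContinuous p g).ae_le (log_rnDeriv_tilted_left_self hg_exp)

lemma integrable_llr_tilted_left_self [SigmaFinite p]
    (hg_exp : Integrable (fun x ↦ Real.exp (g x)) p) (hg : Integrable g (p.tilted g)) :
    Integrable (llr (p.tilted g) p) (p.tilted g) :=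
  (integrable_congr (llr_tilted_left_self hg_exp)).mpr (hg.sub (integrable_const _))

lemma integral_llr_tilted_left_self [SigmaFinite p] [NeZero p]
    (hg_exp : Integrable (fun x ↦ Real.exp (g x)) p) (hg : Integrable g (p.tilted g)) :
    ∫ x, llr (p.tilted g) p x ∂(p.tilted g)
      = ∫ x, g x ∂(p.tilted g) - Real.log (∫ x, Real.exp (g x) ∂p) := by
  have : IsProbabilityMeasure (p.tilted g) := isProbabilityMeasure_tilted hg_exp
  rw [integral_congr_ae (llr_tilted_left_self hg_exp), integral_sub hg (integrable_const _)]
  simp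

lemma integral_sub_log_integral_exp_le_integral_llr [SigmaFinite p] [NeZero p]
    [IsProbabilityMeasure q] (hqp : q ≪ p) (hg : Integrable g q)
    (hg_exp : Integrable (fun x ↦ Real.exp (g x)) p) (h_int : Integrable (llr q p) q) :
    ∫ x, g x ∂q - Real.log (∫ x, Real.exp (g x) ∂p) ≤ ∫ x, llr q p x ∂q := by
  have : IsProbabilityMeasure (p.tilted g) := isProbabilityMeasure_tilted hg_exp
  have h_gibbs : 0 ≤ ∫ x, llr q (p.tilted g) x ∂q :=
    integral_llr_nonneg (hqp.trans (absolutelyContinuous_tilted hg_exp))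
      (integrable_llr_tilted_right hqp hg h_int hg_exp)
  rw [integral_llr_tilted_right hqp hg hg_exp h_int] at h_gibbs
  linarith

theorem KL_tilted_le_of_integral_eq [SigmaFinite p] [NeZero p]
    (hg_exp : Integrable (fun x ↦ Real.exp (g x)) p) (hg : Integrable g (p.tilted g))
    [IsProbabilityMeasure q] (hqp : q ≪ p) (hgq : Integrable g q)
    (h_mean : ∫ x, g x ∂q = ∫ x, g x ∂(p.tilted g)) :
    KL (p.tilted g) p ≤ KL q p := by
  by_cases h_int : Integrable (llr q p) q
  · rw [KL_of_integrable (integrable_llr_tilted_left_self hg_exp hg), KL_of_integrable h_int,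
      integral_llr_tilted_left_self hg_exp hg, ← h_mean]
    exact ENNReal.ofReal_le_ofReal
      (integral_sub_log_integral_exp_le_integral_llr hqp hgq hg_exp h_int)
  · simp [KL_of_not_integrable h_int]

end KL

theorem minimum_relative_entropy_general
    {X : Type*} [MeasurableSpace X] (p : Measure X) [IsProbabilityMeasure p]
    (k : ℕ) (f : X → EuclideanSpace ℝ (Fin k))
    (l : EuclideanSpace ℝ (Fin k))
    (Z : ℝ) (hZ : Z = ∫ x, Real.exp (-⟪l, f x⟫) ∂p)
    (hZint : Integrable (fun x => Real.exp (-⟪l, f x⟫)) p)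
    (qstar : Measure X)
    (hqstar : qstar = p.withDensity (fun x => ENNReal.ofReal (Real.exp (-⟪l, f x⟫) / Z)))
    (hfqstar : Integrable f qstar)
    (fhat : EuclideanSpace ℝ (Fin k)) (hfhat : fhat = ∫ x, f x ∂qstar) :
    ∀ q : Measure X, IsProbabilityMeasure q → q ≪ p →
      Integrable f q → (∫ x, f x ∂q) = fhat →
      KL qstar p ≤ KL q p := by
  intro q hq hqp hfq hmean
  have h_tilted : qstar = p.tilted (fun x ↦ -⟪l, f x⟫) := by rw [hqstar, Measure.tilted, hZ]
  have h_integral : ∀ μ : Measure X, Integrable f μ →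
      ∫ x, -⟪l, f x⟫ ∂μ = -⟪l, ∫ x, f x ∂μ⟫ := fun μ hfμ ↦ by
    rw [integral_neg, integral_inner hfμ]
  subst h_tilted
  refine KL_tilted_le_of_integral_eq hZint (hfqstar.const_inner l).neg hqp
    (hfq.const_inner l).neg ?_
  rw [h_integral q hfq, h_integral _ hfqstar, hmean, hfhat]

/-- Minimum relative entropy: the exponentially tilted measure `q*` with density
`exp(-⟨λ, f⟩)/Z` with respect to `p` minimizes `KL(q‖p)` among all probability measures
`q ≪ p` satisfying the moment constraint `∫ f dq = ∫ f dq*`. -/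
theorem minimum_relative_entropy
    {X : Type*} [MeasurableSpace X] (p : Measure X) [IsProbabilityMeasure p]
    (k : ℕ) (f : X → EuclideanSpace ℝ (Fin k)) (hf : Measurable f)
    (l : EuclideanSpace ℝ (Fin k))
    (Z : ℝ) (hZ : Z = ∫ x, Real.exp (-⟪l, f x⟫) ∂p)
    (hZint : Integrable (fun x => Real.exp (-⟪l, f x⟫)) p) (hZpos : 0 < Z)
    (qstar : Measure X)
    (hqstar : qstar = p.withDensity (fun x => ENNReal.ofReal (Real.exp (-⟪l, f x⟫) / Z)))
    (hfqstar : Integrable f qstar)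
    (fhat : EuclideanSpace ℝ (Fin k)) (hfhat : fhat = ∫ x, f x ∂qstar) :
    ∀ q : Measure X, IsProbabilityMeasure q → q ≪ p →
      Integrable f q → (∫ x, f x ∂q) = fhat →
      KL qstar p ≤ KL q p :=
  minimum_relative_entropy_general p k f l Z hZ hZint qstar hqstar hfqstar fhat hfhat
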